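/- arXiv:2507.14881 — 5 statements merged into one kernel-verified Lean document; each statement's English description precedes it below -/
import Mathlib

section
/- Let d ≥ 1, let H : ℝ^d × ℝ^d → ℝ be continuously differentiable, and let q, p, δq, δp : [t_a, t_b] → ℝ^d be continuously differentiable curves. Define the varied action S(ε) = ∫_{t_a}^{t_b} [(p(t) + ε δp(t))ᵀ (q̇(t) + ε δq̇(t)) − H(q(t) + ε δq(t), p(t) + ε δp(t))] dt. Then S is differentiable at ε = 0 and S'(0) = ∫_{t_a}^{t_b} δq(t)ᵀ (−ṗ(t) − ∇_q H(q(t), p(t))) dt + ∫_{t_a}^{t_b} δp(t)ᵀ (q̇(t) − ∇_p H(q(t), p(t))) dt + p(t_b)ᵀ δq(t_b) − p(t_a)ᵀ δq(t_a). -/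
open MeasureTheory intervalIntegral Set
open scoped RealInnerProductSpace

/-!
The varied action is `S(ε) = ∫ L(z t + ε • δz t) dt` for the phase-space Lagrangian
`L(q, p, v) = ⟪p, v⟫ - H(q, p)`, the curve `z = (q, p, q̇)` and its variation `δz = (δq, δp, δq̇)`.
Since `dL` is continuous, it is bounded on the compact set `[-1, 1] × [t_a, t_b]` of parameters,
so we may differentiate under the integral sign: `S'(0) = ∫ dL_{z t}(δz t) dt`. Writing `dH` through
the two partial gradients and integrating `⟪p, δq̇⟫` by parts gives the formula.
-/

section PartialGradient

variable {E F : Type*} [NormedAddCommGroup E] [InnerProductSpace ℝ E]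
  [NormedAddCommGroup F] [InnerProductSpace ℝ F] {H : E × F → ℝ}

open InnerProductSpace ContinuousLinearMap

theorem gradient_partial_fst_eq [CompleteSpace E] {x : E} {y : F}
    (hH : DifferentiableAt ℝ H (x, y)) :
    gradient (fun x' => H (x', y)) x
      = (toDual ℝ E).symm ((fderiv ℝ H (x, y)).comp (inl ℝ E F)) := by
  refine HasGradientAt.gradient ?_
  rw [hasGradientAt_iff_hasFDerivAt, LinearIsometryEquiv.apply_symm_apply]
  exact hH.hasFDerivAt.comp x (hasFDerivAt_prodMk_left x y)

theorem gradient_partial_snd_eq [CompleteSpace F] {x : E} {y : F}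
    (hH : DifferentiableAt ℝ H (x, y)) :
    gradient (fun y' => H (x, y')) y
      = (toDual ℝ F).symm ((fderiv ℝ H (x, y)).comp (inr ℝ E F)) := by
  refine HasGradientAt.gradient ?_
  rw [hasGradientAt_iff_hasFDerivAt, LinearIsometryEquiv.apply_symm_apply]
  exact hH.hasFDerivAt.comp y (hasFDerivAt_prodMk_right x y)

theorem fderiv_apply_eq_inner_gradient_add [CompleteSpace E] [CompleteSpace F] {x : E} {y : F}
    (hH : DifferentiableAt ℝ H (x, y)) (v : E) (w : F) :
    fderiv ℝ H (x, y) (v, w)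
      = ⟪v, gradient (fun x' => H (x', y)) x⟫ + ⟪w, gradient (fun y' => H (x, y')) y⟫ := by
  rw [gradient_partial_fst_eq hH, gradient_partial_snd_eq hH, real_inner_comm, toDual_symm_apply,
    real_inner_comm, toDual_symm_apply, comp_apply, comp_apply, ← map_add]
  simp

theorem ContDiff.continuous_gradient_partial_fst [CompleteSpace E] (hH : ContDiff ℝ 1 H) :
    Continuous fun z : E × F => gradient (fun x => H (x, z.2)) z.1 := by
  have hH' := hH.differentiable one_ne_zero
  simp_rw [gradient_partial_fst_eq (hH' _)]
  exact (toDual ℝ E).symm.continuous.comp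
    ((hH.continuous_fderiv one_ne_zero).clm_comp continuous_const)

theorem ContDiff.continuous_gradient_partial_snd [CompleteSpace F] (hH : ContDiff ℝ 1 H) :
    Continuous fun z : E × F => gradient (fun y => H (z.1, y)) z.2 := by
  have hH' := hH.differentiable one_ne_zero
  simp_rw [gradient_partial_snd_eq (hH' _)]
  exact (toDual ℝ F).symm.continuous.comp
    ((hH.continuous_fderiv one_ne_zero).clm_comp continuous_const)

end PartialGradient

theorem hasDerivAt_intervalIntegral_comp_add_smul {V W : Type*}
    [NormedAddCommGroup V] [NormedSpace ℝ V] [NormedAddCommGroup W] [NormedSpace ℝ W]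
    {L : V → W} (hL : ContDiff ℝ 1 L) {z δz : ℝ → V} {a b : ℝ}
    (hz : ContinuousOn z (uIcc a b)) (hδz : ContinuousOn δz (uIcc a b)) :
    HasDerivAt (fun ε : ℝ => ∫ t in a..b, L (z t + ε • δz t))
      (∫ t in a..b, fderiv ℝ L (z t) (δz t)) 0 := by
  have hF : ∀ ε : ℝ, IntervalIntegrable (fun t => L (z t + ε • δz t)) volume a b := fun ε =>
    (hL.continuous.comp_continuousOn (hz.add (hδz.const_smul ε))).intervalIntegrable
  have hG : ContinuousOn (fun x : ℝ × ℝ => fderiv ℝ L (z x.2 + x.1 • δz x.2) (δz x.2))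
      (Metric.closedBall 0 1 ×ˢ uIcc a b) := by
    have h2 : ∀ {f : ℝ → V}, ContinuousOn f (uIcc a b) →
        ContinuousOn (fun x : ℝ × ℝ => f x.2) (Metric.closedBall 0 1 ×ˢ uIcc a b) := fun hf =>
      hf.comp continuous_snd.continuousOn fun _ hx => hx.2
    exact ((hL.continuous_fderiv one_ne_zero).comp_continuousOn
      ((h2 hz).add (continuous_fst.continuousOn.smul (h2 hδz)))).clm_apply (h2 hδz)
  obtain ⟨C, hC⟩ :=
    ((isCompact_closedBall 0 1).prod isCompact_uIcc).exists_bound_of_continuousOn hG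
  have hG0 : IntervalIntegrable (fun t => fderiv ℝ L (z t) (δz t)) volume a b :=
    (((hL.continuous_fderiv one_ne_zero).comp_continuousOn hz).clm_apply hδz).intervalIntegrable
  have hdiff := (hasDerivAt_integral_of_dominated_loc_of_deriv_le (bound := fun _ => C)
    (F := fun ε t => L (z t + ε • δz t))
    (F' := fun ε t => fderiv ℝ L (z t + ε • δz t) (δz t))
    (Metric.ball_mem_nhds 0 one_pos)
    (Filter.Eventually.of_forall fun ε => (hF ε).def'.aestronglyMeasurable) (hF 0)
    (by simpa using hG0.def'.aestronglyMeasurable)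
    (Filter.Eventually.of_forall fun t ht ε hε =>
      hC (ε, t) ⟨Metric.ball_subset_closedBall hε, uIoc_subset_uIcc ht⟩)
    intervalIntegrable_const
    (Filter.Eventually.of_forall fun t _ ε _ =>
      (hL.differentiable one_ne_zero _).hasFDerivAt.comp_hasDerivAt ε
        (by simpa using ((hasDerivAt_id ε).smul_const (δz t)).const_add (z t)))).2
  simpa using hdiff

theorem integral_inner_deriv_add_inner_deriv {E : Type*} [NormedAddCommGroup E]
    [InnerProductSpace ℝ E] {u v u' v' : ℝ → E} {a b : ℝ} (hab : a ≤ b)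
    (hu : ∀ t ∈ Icc a b, HasDerivWithinAt u (u' t) (Icc a b) t)
    (hv : ∀ t ∈ Icc a b, HasDerivWithinAt v (v' t) (Icc a b) t)
    (hu' : ContinuousOn u' (Icc a b)) (hv' : ContinuousOn v' (Icc a b)) :
    ∫ t in a..b, (⟪u t, v' t⟫ + ⟪u' t, v t⟫) = ⟪u b, v b⟫ - ⟪u a, v a⟫ := by
  have huc : ContinuousOn u (Icc a b) := fun t ht => (hu t ht).continuousWithinAt
  have hvc : ContinuousOn v (Icc a b) := fun t ht => (hv t ht).continuousWithinAt
  have hint : ContinuousOn (fun t => ⟪u t, v' t⟫ + ⟪u' t, v t⟫) (Icc a b) :=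
    (huc.inner hv').add (hu'.inner hvc)
  refine integral_eq_sub_of_hasDeriv_right_of_le hab (huc.inner hvc) (fun t ht => ?_)
    (hint.intervalIntegrable_of_Icc hab)
  have hnhds : Icc a b ∈ nhds t := Icc_mem_nhds ht.1 ht.2
  exact ((((hu t (Ioo_subset_Icc_self ht)).hasDerivAt hnhds).inner ℝ
    ((hv t (Ioo_subset_Icc_self ht)).hasDerivAt hnhds))).hasDerivWithinAt

section PhaseSpaceLagrangian

variable {E : Type*} [NormedAddCommGroup E] [InnerProductSpace ℝ E] {H : E × E → ℝ}

def phaseSpaceLagrangian (H : E × E → ℝ) (w : E × E × E) : ℝ :=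
  ⟪w.2.1, w.2.2⟫ - H (w.1, w.2.1)

theorem ContDiff.phaseSpaceLagrangian (hH : ContDiff ℝ 1 H) :
    ContDiff ℝ 1 (phaseSpaceLagrangian H) :=
  (contDiff_fst.comp contDiff_snd).inner ℝ (contDiff_snd.comp contDiff_snd) |>.sub
    (hH.comp (contDiff_fst.prodMk (contDiff_fst.comp contDiff_snd)))

theorem fderiv_phaseSpaceLagrangian_apply [CompleteSpace E] {x y v : E}
    (hH : DifferentiableAt ℝ H (x, y)) (δx δy δv : E) :
    fderiv ℝ (phaseSpaceLagrangian H) (x, y, v) (δx, δy, δv)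
      = ⟪δy, v⟫ + ⟪y, δv⟫ - ⟪δx, gradient (fun x' => H (x', y)) x⟫
        - ⟪δy, gradient (fun y' => H (x, y')) y⟫ := by
  have hpv : HasFDerivAt (fun w : E × E × E => ⟪w.2.1, w.2.2⟫) _ (x, y, v) :=
    (hasFDerivAt_fst.comp _ hasFDerivAt_snd).inner ℝ (hasFDerivAt_snd.comp _ hasFDerivAt_snd)
  have hHw : HasFDerivAt (fun w : E × E × E => H (w.1, w.2.1)) _ (x, y, v) :=
    hH.hasFDerivAt.comp (x, y, v)
      (hasFDerivAt_fst.prodMk (hasFDerivAt_fst.comp (x, y, v) hasFDerivAt_snd))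
  have hL : HasFDerivAt (phaseSpaceLagrangian H) _ (x, y, v) := hpv.sub hHw
  rw [hL.fderiv]
  simp only [Function.comp_apply, sub_apply, ContinuousLinearMap.comp_apply,
    ContinuousLinearMap.prod_apply, ContinuousLinearMap.coe_snd', ContinuousLinearMap.coe_fst',
    fderivInnerCLM_apply, fderiv_apply_eq_inner_gradient_add hH]
  ring

theorem integral_fderiv_phaseSpaceLagrangian_eq [CompleteSpace E] (hH : ContDiff ℝ 1 H)
    {a b : ℝ} (hab : a ≤ b) {q p δq δp q' p' δq' : ℝ → E}
    (hq : ContinuousOn q (Icc a b)) (hδp : ContinuousOn δp (Icc a b))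
    (hp : ∀ t ∈ Icc a b, HasDerivWithinAt p (p' t) (Icc a b) t)
    (hδq : ∀ t ∈ Icc a b, HasDerivWithinAt δq (δq' t) (Icc a b) t)
    (hq' : ContinuousOn q' (Icc a b)) (hp' : ContinuousOn p' (Icc a b))
    (hδq' : ContinuousOn δq' (Icc a b)) :
    ∫ t in a..b, fderiv ℝ (phaseSpaceLagrangian H) (q t, p t, q' t) (δq t, δp t, δq' t)
      = (∫ t in a..b, ⟪δq t, -p' t - gradient (fun x => H (x, p t)) (q t)⟫)
        + (∫ t in a..b, ⟪δp t, q' t - gradient (fun y => H (q t, y)) (p t)⟫)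
        + (⟪p b, δq b⟫ - ⟪p a, δq a⟫) := by
  have hpc : ContinuousOn p (Icc a b) := fun t ht => (hp t ht).continuousWithinAt
  have hδqc : ContinuousOn δq (Icc a b) := fun t ht => (hδq t ht).continuousWithinAt
  have hqp := hq.prodMk hpc
  have hδqI : IntervalIntegrable
      (fun t => ⟪δq t, -p' t - gradient (fun x => H (x, p t)) (q t)⟫) volume a b :=
    (hδqc.inner (hp'.neg.sub (hH.continuous_gradient_partial_fst.comp_continuousOn hqp))
      ).intervalIntegrable_of_Icc hab
  have hδpI : IntervalIntegrable
      (fun t => ⟪δp t, q' t - gradient (fun y => H (q t, y)) (p t)⟫) volume a b :=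
    (hδp.inner (hq'.sub (hH.continuous_gradient_partial_snd.comp_continuousOn hqp))
      ).intervalIntegrable_of_Icc hab
  have hpδqI : IntervalIntegrable (fun t => ⟪p t, δq' t⟫ + ⟪p' t, δq t⟫) volume a b :=
    ((hpc.inner hδq').add (hp'.inner hδqc)).intervalIntegrable_of_Icc hab
  rw [← integral_inner_deriv_add_inner_deriv hab hp hδq hp' hδq', ← integral_add hδqI hδpI,
    ← integral_add (hδqI.add hδpI) hpδqI]
  refine integral_congr fun t _ => ?_
  simp only [fderiv_phaseSpaceLagrangian_apply ((hH.differentiable one_ne_zero) _),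
    inner_sub_right, inner_neg_right, real_inner_comm]
  ring

end PhaseSpaceLagrangian

theorem first_variation_of_action_general
    (d : ℕ)
    (H : EuclideanSpace ℝ (Fin d) × EuclideanSpace ℝ (Fin d) → ℝ)
    (hH : ContDiff ℝ 1 H)
    (ta tb : ℝ) (htab : ta ≤ tb)
    (q p δq δp q' p' δq' δp' : ℝ → EuclideanSpace ℝ (Fin d))
    (hq : ∀ t ∈ Icc ta tb, HasDerivWithinAt q (q' t) (Icc ta tb) t)
    (hp : ∀ t ∈ Icc ta tb, HasDerivWithinAt p (p' t) (Icc ta tb) t)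
    (hδq : ∀ t ∈ Icc ta tb, HasDerivWithinAt δq (δq' t) (Icc ta tb) t)
    (hδp : ∀ t ∈ Icc ta tb, HasDerivWithinAt δp (δp' t) (Icc ta tb) t)
    (hq' : ContinuousOn q' (Icc ta tb))
    (hp' : ContinuousOn p' (Icc ta tb))
    (hδq' : ContinuousOn δq' (Icc ta tb))
    (S : ℝ → ℝ)
    (hS : ∀ ε : ℝ, S ε = ∫ t in ta..tb,
      (⟪p t + ε • δp t, q' t + ε • δq' t⟫
        - H (q t + ε • δq t, p t + ε • δp t))) :
    HasDerivAt S
      ((∫ t in ta..tb,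
          ⟪δq t, -p' t - gradient (fun x => H (x, p t)) (q t)⟫)
        + (∫ t in ta..tb,
          ⟪δp t, q' t - gradient (fun y => H (q t, y)) (p t)⟫)
        + ⟪p tb, δq tb⟫ - ⟪p ta, δq ta⟫) 0 := by
  have hqc : ContinuousOn q (Icc ta tb) := fun t ht => (hq t ht).continuousWithinAt
  have hpc : ContinuousOn p (Icc ta tb) := fun t ht => (hp t ht).continuousWithinAt
  have hδqc : ContinuousOn δq (Icc ta tb) := fun t ht => (hδq t ht).continuousWithinAt
  have hδpc : ContinuousOn δp (Icc ta tb) := fun t ht => (hδp t ht).continuousWithinAt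
  have hS_eq : S = fun ε : ℝ => ∫ t in ta..tb,
      phaseSpaceLagrangian H ((q t, p t, q' t) + ε • (δq t, δp t, δq' t)) := funext hS
  have hvar := hasDerivAt_intervalIntegral_comp_add_smul hH.phaseSpaceLagrangian
    (z := fun t => (q t, p t, q' t)) (δz := fun t => (δq t, δp t, δq' t))
    (by rw [uIcc_of_le htab]; exact hqc.prodMk (hpc.prodMk hq'))
    (by rw [uIcc_of_le htab]; exact hδqc.prodMk (hδpc.prodMk hδq'))
  rw [hS_eq, add_sub_assoc]
  exact hvar.congr_deriv
    (integral_fderiv_phaseSpaceLagrangian_eq hH htab hqc hδpc hp hδq hq' hp' hδq')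

/-- For a C¹ Hamiltonian `H` on `ℝ^d × ℝ^d` and C¹ curves
`q, p, δq, δp : [t_a, t_b] → ℝ^d` (with continuous derivatives `q', p', δq', δp'`),
the varied action `S(ε)` is differentiable at `ε = 0` with the stated derivative. -/
theorem first_variation_of_action
    (d : ℕ) (hd : 1 ≤ d)
    (H : EuclideanSpace ℝ (Fin d) × EuclideanSpace ℝ (Fin d) → ℝ)
    (hH : ContDiff ℝ 1 H)
    (ta tb : ℝ) (htab : ta ≤ tb)
    (q p δq δp q' p' δq' δp' : ℝ → EuclideanSpace ℝ (Fin d))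
    (hq : ∀ t ∈ Icc ta tb, HasDerivWithinAt q (q' t) (Icc ta tb) t)
    (hp : ∀ t ∈ Icc ta tb, HasDerivWithinAt p (p' t) (Icc ta tb) t)
    (hδq : ∀ t ∈ Icc ta tb, HasDerivWithinAt δq (δq' t) (Icc ta tb) t)
    (hδp : ∀ t ∈ Icc ta tb, HasDerivWithinAt δp (δp' t) (Icc ta tb) t)
    (hq' : ContinuousOn q' (Icc ta tb))
    (hp' : ContinuousOn p' (Icc ta tb))
    (hδq' : ContinuousOn δq' (Icc ta tb))
    (hδp' : ContinuousOn δp' (Icc ta tb))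
    (S : ℝ → ℝ)
    (hS : ∀ ε : ℝ, S ε = ∫ t in ta..tb,
      (⟪p t + ε • δp t, q' t + ε • δq' t⟫
        - H (q t + ε • δq t, p t + ε • δp t))) :
    HasDerivAt S
      ((∫ t in ta..tb,
          ⟪δq t, -p' t - gradient (fun x => H (x, p t)) (q t)⟫)
        + (∫ t in ta..tb,
          ⟪δp t, q' t - gradient (fun y => H (q t, y)) (p t)⟫)
        + ⟪p tb, δq tb⟫ - ⟪p ta, δq ta⟫) 0 :=
  first_variation_of_action_general d H hH ta tb htab q p δq δp q' p' δq' δp' hq hp hδq hδp hq' hp'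
    hδq' S hS
end

section
/- Let d ≥ 1, let H : ℝ^d × ℝ^d → ℝ be continuously differentiable, and let (q(t, α), p(t, α)) : [t_a, t_b] × ℝ → ℝ^d × ℝ^d be a family of curves that is continuously differentiable jointly in (t, α), has a continuous mixed partial derivative ∂²q/∂α∂t, and is such that for every α the curve t ↦ (q(t, α), p(t, α)) satisfies Hamilton's equations for H. Define S(α) = ∫_{t_a}^{t_b} [p(t, α)ᵀ ∂_t q(t, α) − H(q(t, α), p(t, α))] dt. Then S is differentiable and S'(α) = p(t_b, α)ᵀ ∂_α q(t_b, α) − p(t_a, α)ᵀ ∂_α q(t_a, α) for every α; that is, the action of a field of Hamiltonian solutions depends on the family only through the endpoint positions, with derivative given by the endpoint momenta. -/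
/-!
Differentiate the action under the integral sign. Along Hamilton's equations the `α`-derivative
of the integrand `⟪p, ∂ₜq⟫ - H(q, p)` is
`⟪p, ∂_α∂ₜq⟫ - ⟪∇_q H, ∂_α q⟫ = ⟪p, ∂ₜ∂_α q⟫ + ⟪∂ₜp, ∂_α q⟫`, the `t`-derivative of
`⟪p, ∂_α q⟫`, so the fundamental theorem of calculus leaves only the boundary terms.
The exchange `∂_α∂ₜq = ∂ₜ∂_α q` comes from the continuity of the mixed partial, again by
differentiating under the integral sign.
-/

open MeasureTheory intervalIntegral Set
open scoped RealInnerProductSpace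

section Partials

variable {E : Type*} [NormedAddCommGroup E] [NormedSpace ℝ E] {f : ℝ → ℝ → E}

theorem hasDerivAt_partial_fst (hf : ContDiff ℝ 1 fun x : ℝ × ℝ => f x.1 x.2) (t α : ℝ) :
    HasDerivAt (fun s => f s α) (fderiv ℝ (fun x : ℝ × ℝ => f x.1 x.2) (t, α) (1, 0)) t :=
  (hf.differentiable one_ne_zero (t, α)).hasFDerivAt.comp_hasDerivAt (f := fun s => (s, α)) t
    ((hasDerivAt_id t).prodMk (hasDerivAt_const t α))

theorem hasDerivAt_partial_snd (hf : ContDiff ℝ 1 fun x : ℝ × ℝ => f x.1 x.2) (t α : ℝ) :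
    HasDerivAt (f t) (fderiv ℝ (fun x : ℝ × ℝ => f x.1 x.2) (t, α) (0, 1)) α :=
  (hf.differentiable one_ne_zero (t, α)).hasFDerivAt.comp_hasDerivAt (f := fun b => (t, b)) α
    ((hasDerivAt_const α t).prodMk (hasDerivAt_id α))

theorem continuous_deriv_partial_fst (hf : ContDiff ℝ 1 fun x : ℝ × ℝ => f x.1 x.2) :
    Continuous fun x : ℝ × ℝ => deriv (fun s => f s x.2) x.1 := by
  simp_rw [fun x : ℝ × ℝ => (hasDerivAt_partial_fst hf x.1 x.2).deriv]
  exact (hf.continuous_fderiv one_ne_zero).clm_apply continuous_const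

theorem continuous_deriv_partial_snd (hf : ContDiff ℝ 1 fun x : ℝ × ℝ => f x.1 x.2) :
    Continuous fun x : ℝ × ℝ => deriv (f x.1) x.2 := by
  simp_rw [fun x : ℝ × ℝ => (hasDerivAt_partial_snd hf x.1 x.2).deriv]
  exact (hf.continuous_fderiv one_ne_zero).clm_apply continuous_const

theorem hasDerivAt_intervalIntegral_of_continuous_deriv [CompleteSpace E] {F F' : ℝ → ℝ → E}
    {a b : ℝ}
    (hF : ∀ x, Continuous fun t => F t x) (hF' : Continuous fun z : ℝ × ℝ => F' z.1 z.2)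
    (hderiv : ∀ t x, HasDerivAt (F t) (F' t x) x) (x₀ : ℝ) :
    HasDerivAt (fun x => ∫ t in a..b, F t x) (∫ t in a..b, F' t x₀) x₀ := by
  obtain ⟨C, hC⟩ :=
    (isCompact_uIcc.prod (isCompact_closedBall x₀ 1)).exists_bound_of_continuousOn hF'.continuousOn
  exact (hasDerivAt_integral_of_dominated_loc_of_deriv_le (F := fun x t => F t x)
    (bound := fun _ => C) (Metric.ball_mem_nhds x₀ one_pos)
    (.of_forall fun x => (hF x).aestronglyMeasurable) ((hF x₀).intervalIntegrable a b)
    (hF'.comp (continuous_id.prodMk continuous_const)).aestronglyMeasurable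
    (ae_of_all _ fun t ht x hx =>
      hC (t, x) ⟨uIoc_subset_uIcc ht, Metric.ball_subset_closedBall hx⟩)
    intervalIntegrable_const (ae_of_all _ fun t _ x _ => hderiv t x)).2

theorem hasDerivAt_deriv_partial_snd_of_continuous_mixed [CompleteSpace E]
    (hf : ContDiff ℝ 1 fun x : ℝ × ℝ => f x.1 x.2)
    (hmix : ∀ t α, DifferentiableAt ℝ (fun b => deriv (fun s => f s b) t) α)
    (hmix_cont : Continuous fun x : ℝ × ℝ => deriv (fun b => deriv (fun s => f s b) x.1) x.2)
    (α t₀ : ℝ) :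
    HasDerivAt (fun t => deriv (f t) α) (deriv (fun b => deriv (fun s => f s b) t₀) α) t₀ := by
  have hft_cont (b : ℝ) : Continuous fun s => deriv (fun s => f s b) s :=
    (continuous_deriv_partial_fst hf).comp (continuous_id.prodMk continuous_const)
  have hm_cont : Continuous fun s => deriv (fun b => deriv (fun s => f s b) s) α :=
    hmix_cont.comp (continuous_id.prodMk continuous_const)
  -- `∂_α f(t, α) - ∂_α f(0, α) = ∂_α ∫₀ᵗ ∂ₜ f(s, α) ds`, then differentiate under the integral.
  have hintegral (t : ℝ) : deriv (f t) α - deriv (f 0) α =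
      ∫ s in (0 : ℝ)..t, deriv (fun b => deriv (fun s => f s b) s) α := by
    have hleibniz := hasDerivAt_intervalIntegral_of_continuous_deriv (a := 0) (b := t)
      (F := fun s b => deriv (fun s => f s b) s) hft_cont hmix_cont
      (fun s b => (hmix s b).hasDerivAt) α
    have hftc :
        (fun b => ∫ s in (0 : ℝ)..t, deriv (fun s => f s b) s) = fun b => f t b - f 0 b :=
      funext fun b => integral_eq_sub_of_hasDerivAt
        (fun s _ => (hasDerivAt_partial_fst hf s b).differentiableAt.hasDerivAt)
        ((hft_cont b).intervalIntegrable 0 t)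
    rw [hftc] at hleibniz
    exact ((hasDerivAt_partial_snd hf t α).differentiableAt.hasDerivAt.sub
      (hasDerivAt_partial_snd hf 0 α).differentiableAt.hasDerivAt).unique hleibniz
  have hrepr : (fun t => deriv (f t) α) =
      fun t => deriv (f 0) α + ∫ s in (0 : ℝ)..t, deriv (fun b => deriv (fun s => f s b) s) α :=
    funext fun t => by rw [← hintegral t, add_sub_cancel]
  rw [hrepr]
  exact (integral_hasDerivAt_right (hm_cont.intervalIntegrable 0 t₀)
    (hm_cont.stronglyMeasurableAtFilter _ _) hm_cont.continuousAt).const_add _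

end Partials

section Hamiltonian

variable {F : Type*} [NormedAddCommGroup F] [InnerProductSpace ℝ F] [CompleteSpace F]
  {H : F × F → ℝ} {u v w : ℝ → F} {u' v' w' : F} {α : ℝ}

theorem DifferentiableAt.hasDerivAt_comp_prodMk_inner_gradient
    (hH : DifferentiableAt ℝ H (u α, v α)) (hu : HasDerivAt u u' α) (hv : HasDerivAt v v' α) :
    HasDerivAt (fun b => H (u b, v b))
      (⟪gradient (fun x => H (x, v α)) (u α), u'⟫ +
        ⟪gradient (fun y => H (u α, y)) (v α), v'⟫) α := by
  have hH' := hH.hasFDerivAt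
  have hH_fst : HasFDerivAt (fun x => H (x, v α))
      ((fderiv ℝ H (u α, v α)).comp (.inl ℝ F F)) (u α) :=
    hH'.comp (u α) (hasFDerivAt_prodMk_left (u α) (v α))
  have hH_snd : HasFDerivAt (fun y => H (u α, y))
      ((fderiv ℝ H (u α, v α)).comp (.inr ℝ F F)) (v α) :=
    hH'.comp (v α) (hasFDerivAt_prodMk_right (u α) (v α))
  rw [inner_gradient_left, inner_gradient_left, hH_fst.fderiv, hH_snd.fderiv,
    ContinuousLinearMap.comp_inl_add_comp_inr (fderiv ℝ H (u α, v α)) (u', v')]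
  exact hH'.comp_hasDerivAt α (hu.prodMk hv)

/-- Along a solution (`w = ∂ₜq = ∇_p H`) the `∇_p H`-terms of the variation cancel. -/
theorem hasDerivAt_inner_sub_hamiltonian (hH : DifferentiableAt ℝ H (u α, v α))
    (hu : HasDerivAt u u' α) (hv : HasDerivAt v v' α) (hw : HasDerivAt w w' α)
    (hw_eq : w α = gradient (fun y => H (u α, y)) (v α)) :
    HasDerivAt (fun b => ⟪v b, w b⟫ - H (u b, v b))
      (⟪v α, w'⟫ - ⟪gradient (fun x => H (x, v α)) (u α), u'⟫) α := by
  refine ((hv.inner ℝ hw).sub (hH.hasDerivAt_comp_prodMk_inner_gradient hu hv)).congr_deriv ?_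
  rw [← hw_eq, real_inner_comm v' (w α)]
  ring

end Hamiltonian

theorem action_of_field_of_solutions_depends_on_endpoints_general
    (d : ℕ)
    (H : EuclideanSpace ℝ (Fin d) × EuclideanSpace ℝ (Fin d) → ℝ)
    (hH : ContDiff ℝ 1 H)
    (ta tb : ℝ)
    (q p : ℝ → ℝ → EuclideanSpace ℝ (Fin d))
    (hq : ContDiff ℝ 1 (fun x : ℝ × ℝ => q x.1 x.2))
    (hp : ContDiff ℝ 1 (fun x : ℝ × ℝ => p x.1 x.2))
    (hmix_exists : ∀ (t α : ℝ),
      DifferentiableAt ℝ (fun b => deriv (fun s => q s b) t) α)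
    (hmix_cont : Continuous (fun x : ℝ × ℝ =>
      deriv (fun b => deriv (fun s => q s b) x.1) x.2))
    (hamq : ∀ (α t : ℝ), HasDerivAt (fun s => q s α)
      (gradient (fun y => H (q t α, y)) (p t α)) t)
    (hamp : ∀ (α t : ℝ), HasDerivAt (fun s => p s α)
      (-gradient (fun x => H (x, p t α)) (q t α)) t)
    (S : ℝ → ℝ)
    (hS : ∀ α : ℝ, S α = ∫ t in ta..tb,
      (⟪p t α, deriv (fun s => q s α) t⟫ - H (q t α, p t α))) :
    ∀ α : ℝ, HasDerivAt S
      (⟪p tb α, deriv (fun b => q tb b) α⟫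
        - ⟪p ta α, deriv (fun b => q ta b) α⟫) α := by
  intro α
  set L : ℝ → ℝ → ℝ := fun t b => ⟪p t b, deriv (fun s => q s b) t⟫ - H (q t b, p t b)
  set G : ℝ → ℝ → ℝ := fun t b => ⟪p t b, deriv (fun b => deriv (fun s => q s b) t) b⟫ +
    ⟪deriv (fun s => p s b) t, deriv (q t) b⟫
  have hL (t b : ℝ) : HasDerivAt (L t) (G t b) b := by
    refine (hasDerivAt_inner_sub_hamiltonian (hH.differentiable one_ne_zero _)
      (hasDerivAt_partial_snd hq t b).differentiableAt.hasDerivAt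
      (hasDerivAt_partial_snd hp t b) (hmix_exists t b).hasDerivAt (hamq b t).deriv).congr_deriv ?_
    simp only [G]
    rw [(hamp b t).deriv, inner_neg_left, sub_eq_add_neg]
  have hG (t : ℝ) : HasDerivAt (fun s => ⟪p s α, deriv (q s) α⟫) (G t α) t :=
    (hasDerivAt_partial_fst hp t α).differentiableAt.hasDerivAt.inner ℝ
      (hasDerivAt_deriv_partial_snd_of_continuous_mixed hq hmix_exists hmix_cont α t)
  have hL_cont (b : ℝ) : Continuous fun t => L t b := by
    have hι : Continuous fun t : ℝ => (t, b) := continuous_id.prodMk continuous_const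
    exact ((hp.continuous.comp hι).inner ((continuous_deriv_partial_fst hq).comp hι)).sub
      (hH.continuous.comp ((hq.continuous.comp hι).prodMk (hp.continuous.comp hι)))
  have hG_cont : Continuous fun z : ℝ × ℝ => G z.1 z.2 :=
    (hp.continuous.inner hmix_cont).add
      ((continuous_deriv_partial_fst hp).inner (continuous_deriv_partial_snd hq))
  rw [show S = fun b => ∫ t in ta..tb, L t b from funext hS,
    ← integral_eq_sub_of_hasDerivAt (fun t _ => hG t)
      ((hG_cont.comp (continuous_id.prodMk continuous_const)).intervalIntegrable ta tb)]
  exact hasDerivAt_intervalIntegral_of_continuous_deriv hL_cont hG_cont hL α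

/-- For a jointly C¹ family `(q(t,α), p(t,α))` of solutions of
Hamilton's equations for a C¹ Hamiltonian `H`, with existing and continuous mixed
partial `∂²q/∂α∂t`, the action `S(α)` is differentiable with
`S'(α) = p(t_b,α)ᵀ ∂_α q(t_b,α) − p(t_a,α)ᵀ ∂_α q(t_a,α)`. -/
theorem action_of_field_of_solutions_depends_on_endpoints
    (d : ℕ) (hd : 1 ≤ d)
    (H : EuclideanSpace ℝ (Fin d) × EuclideanSpace ℝ (Fin d) → ℝ)
    (hH : ContDiff ℝ 1 H)
    (ta tb : ℝ) (htab : ta ≤ tb)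
    (q p : ℝ → ℝ → EuclideanSpace ℝ (Fin d))
    (hq : ContDiff ℝ 1 (fun x : ℝ × ℝ => q x.1 x.2))
    (hp : ContDiff ℝ 1 (fun x : ℝ × ℝ => p x.1 x.2))
    (hmix_exists : ∀ (t α : ℝ),
      DifferentiableAt ℝ (fun b => deriv (fun s => q s b) t) α)
    (hmix_cont : Continuous (fun x : ℝ × ℝ =>
      deriv (fun b => deriv (fun s => q s b) x.1) x.2))
    (hamq : ∀ (α t : ℝ), HasDerivAt (fun s => q s α)
      (gradient (fun y => H (q t α, y)) (p t α)) t)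
    (hamp : ∀ (α t : ℝ), HasDerivAt (fun s => p s α)
      (-gradient (fun x => H (x, p t α)) (q t α)) t)
    (S : ℝ → ℝ)
    (hS : ∀ α : ℝ, S α = ∫ t in ta..tb,
      (⟪p t α, deriv (fun s => q s α) t⟫ - H (q t α, p t α))) :
    ∀ α : ℝ, HasDerivAt S
      (⟪p tb α, deriv (fun b => q tb b) α⟫
        - ⟪p ta α, deriv (fun b => q ta b) α⟫) α :=
  action_of_field_of_solutions_depends_on_endpoints_general d H hH ta tb q p hq hp hmix_exists
    hmix_cont hamq hamp S hS
end

section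
/- Let d ≥ 1, let S : ℝ^d × ℝ^d → ℝ be twice continuously differentiable, let U ⊆ ℝ^d × ℝ^d be open, and let Q, P : U → ℝ^d be differentiable maps such that for every (q₀, p₀) ∈ U one has p₀ = −∇₁S(q₀, Q(q₀, p₀)) and P(q₀, p₀) = ∇₂S(q₀, Q(q₀, p₀)), where ∇₁S and ∇₂S denote the gradients of S in its first and second ℝ^d arguments. Then the map φ = (Q, P) : U → ℝ^d × ℝ^d is symplectic: at every point x ∈ U its total derivative Dφ(x), viewed as a (2d) × (2d) real matrix, satisfies Dφ(x)ᵀ J Dφ(x) = J, where J is the canonical symplectic matrix J = [[0, I_d], [−I_d, 0]]. -/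
/-!
Write `ω(u, v) = ⟪u.1, v.2⟫ - ⟪u.2, v.1⟫` and `H` for the Hessian of `S` at `(q, Q(q, p))`.
Differentiating the relations `p = -∇₁S(q, Q)` and `P = ∇₂S(q, Q)` in a direction `w` gives
`⟪w.2, v⟫ = -H (w.1, DQ w) (v, 0)` and `⟪DP w, v⟫ = H (w.1, DQ w) (0, v)`. Substituting these,
`ω(Dφ w, Dφ w') - ω(w, w') = H(z', z) - H(z, z')` with `z = (w.1, DQ w)`, which vanishes by the
symmetry of second derivatives. In coordinates, `Dᵀ J D` and `J` are the Gram matrices of `ω` on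
the images `Dφ eᵢ` and on the standard basis vectors `eᵢ`.
-/

open Matrix ContinuousLinearMap InnerProductSpace Filter
open scoped RealInnerProductSpace Topology

section

variable {E : Type*} [NormedAddCommGroup E] [InnerProductSpace ℝ E]

def symplecticForm (u v : E × E) : ℝ := ⟪u.1, v.2⟫ - ⟪u.2, v.1⟫

theorem symplecticForm_prod_eq_of_hessian {H : E × E →L[ℝ] E × E →L[ℝ] ℝ}
    (hH : ∀ a b, H a b = H b a) {A B : E × E → E}
    (hfst : ∀ w v, ⟪w.2, v⟫ = -H (w.1, A w) (v, 0))
    (hsnd : ∀ w v, ⟪B w, v⟫ = H (w.1, A w) (0, v)) (w w' : E × E) :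
    symplecticForm (A w, B w) (A w', B w') = symplecticForm w w' := by
  have hsplit : ∀ c a b, H c (a, b) = H c (a, 0) + H c (0, b) := fun c a b => by
    rw [← map_add, Prod.mk_add_mk, add_zero, zero_add]
  have hsymm := hH (w'.1, A w') (w.1, A w)
  rw [hsplit, hsplit (w.1, A w)] at hsymm
  dsimp only [symplecticForm]
  rw [real_inner_comm (B w'), real_inner_comm w'.2, hfst, hfst, hsnd, hsnd]
  linarith

end

section

variable {E F G : Type*} [NormedAddCommGroup E] [InnerProductSpace ℝ E] [CompleteSpace E]
  [NormedAddCommGroup F] [NormedSpace ℝ F] [NormedAddCommGroup G] [NormedSpace ℝ G]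

/-- With `L = inl` or `inr` this is the partial gradient `∇₁S` or `∇₂S` of `S : E × E → ℝ`. -/
noncomputable def partialGradient (S : G → ℝ) (L : E →L[ℝ] G) (z : G) : E :=
  (toDual ℝ E).symm ((fderiv ℝ S z).comp L)

theorem gradient_comp_prodMk_left {S : E × F → ℝ} {a : E} {b : F}
    (hS : DifferentiableAt ℝ S (a, b)) :
    gradient (fun a' => S (a', b)) a = partialGradient S (inl ℝ E F) (a, b) := by
  rw [gradient, partialGradient]
  congr 1
  exact (hS.hasFDerivAt.comp a (hasFDerivAt_prodMk_left a b)).fderiv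

theorem gradient_comp_prodMk_right {S : F × E → ℝ} {a : F} {b : E}
    (hS : DifferentiableAt ℝ S (a, b)) :
    gradient (fun b' => S (a, b')) b = partialGradient S (inr ℝ F E) (a, b) := by
  rw [gradient, partialGradient]
  congr 1
  exact (hS.hasFDerivAt.comp b (hasFDerivAt_prodMk_right a b)).fderiv

variable {S : G → ℝ} {γ : F → G} {x : F}

theorem differentiableAt_partialGradient_comp (hS : DifferentiableAt ℝ (fderiv ℝ S) (γ x))
    (hγ : DifferentiableAt ℝ γ x) (L : E →L[ℝ] G) :
    DifferentiableAt ℝ (fun y => partialGradient S L (γ y)) x :=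
  (toDual ℝ E).symm.toLinearIsometry.toContinuousLinearMap.differentiableAt.comp x
    ((hS.comp x hγ).clm_comp (differentiableAt_const L))

theorem inner_fderiv_partialGradient_comp (hS : DifferentiableAt ℝ (fderiv ℝ S) (γ x))
    (hγ : DifferentiableAt ℝ γ x) (L : E →L[ℝ] G) (w : F) (v : E) :
    ⟪fderiv ℝ (fun y => partialGradient S L (γ y)) x w, v⟫ =
      fderiv ℝ (fderiv ℝ S) (γ x) (fderiv ℝ γ x w) (L v) := by
  have hder : HasFDerivAt (fun y => partialGradient S L (γ y)) _ x :=
    (toDual ℝ E).symm.toLinearIsometry.toContinuousLinearMap.hasFDerivAt.comp x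
      ((hS.hasFDerivAt.comp x hγ.hasFDerivAt).clm_comp (hasFDerivAt_const L x))
  rw [hder.fderiv]
  simp [toDual_symm_apply]

end

section

variable {E : Type*} [NormedAddCommGroup E] [InnerProductSpace ℝ E] [CompleteSpace E]

theorem symplecticForm_fderiv_eq_of_generatingFunction {S : E × E → ℝ} (hS : ContDiff ℝ 2 S)
    {Q P : E × E → E} {x : E × E} (hQ : DifferentiableAt ℝ Q x)
    (hgen : ∀ᶠ y in 𝓝 x,
      y.2 = -gradient (fun a => S (a, Q y)) y.1 ∧ P y = gradient (fun b => S (y.1, b)) (Q y))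
    (w w' : E × E) :
    symplecticForm (fderiv ℝ (fun y => (Q y, P y)) x w) (fderiv ℝ (fun y => (Q y, P y)) x w') =
      symplecticForm w w' := by
  set γ : E × E → E × E := fun y => (y.1, Q y)
  set H := fderiv ℝ (fderiv ℝ S) (γ x)
  have hγ : DifferentiableAt ℝ γ x := differentiableAt_fst.prodMk hQ
  have hγ' : ∀ w, fderiv ℝ γ x w = (w.1, fderiv ℝ Q x w) := by
    simp [γ, (hasFDerivAt_fst.prodMk hQ.hasFDerivAt).fderiv]
  have hS₁ : Differentiable ℝ S := hS.differentiable two_ne_zero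
  have hS₂ : DifferentiableAt ℝ (fderiv ℝ S) (γ x) :=
    (hS.fderiv_right (m := 1) le_rfl).differentiable one_ne_zero _
  have hp : (fun y : E × E => y.2) =ᶠ[𝓝 x] fun y => -partialGradient S (inl ℝ E E) (γ y) :=
    hgen.mono fun y hy => by dsimp only; rw [hy.1, gradient_comp_prodMk_left (hS₁ _)]
  have hP : P =ᶠ[𝓝 x] fun y => partialGradient S (inr ℝ E E) (γ y) :=
    hgen.mono fun y hy => by dsimp only; rw [hy.2, gradient_comp_prodMk_right (hS₁ _)]
  have hPx : DifferentiableAt ℝ P x :=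
    (differentiableAt_partialGradient_comp hS₂ hγ _).congr_of_eventuallyEq hP
  have hfst : ∀ w v, ⟪w.2, v⟫ = -H (w.1, fderiv ℝ Q x w) (v, 0) := by
    intro w v
    have h := congrArg (fun L : E × E →L[ℝ] E => ⟪L w, v⟫) hp.fderiv_eq
    simp only [fderiv_snd, coe_snd'] at h
    rw [h, fderiv_fun_neg, _root_.neg_apply, inner_neg_left,
      inner_fderiv_partialGradient_comp hS₂ hγ, hγ']
    rfl
  have hsnd : ∀ w v, ⟪fderiv ℝ P x w, v⟫ = H (w.1, fderiv ℝ Q x w) (0, v) := by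
    intro w v
    rw [hP.fderiv_eq, inner_fderiv_partialGradient_comp hS₂ hγ, hγ']
    rfl
  rw [hQ.fderiv_prodMk hPx]
  exact symplecticForm_prod_eq_of_hessian (hS.contDiffAt.isSymmSndFDerivAt (by simp)) hfst hsnd
    w w'

end

section

variable {ι : Type*} [Fintype ι] [DecidableEq ι]

noncomputable def euclideanProdBasis : ι ⊕ ι → EuclideanSpace ℝ ι × EuclideanSpace ℝ ι :=
  Sum.elim (fun l => (EuclideanSpace.single l 1, 0)) (fun l => (0, EuclideanSpace.single l 1))

theorem transpose_mul_fromBlocks_mul_apply {R : Type*} [Ring R]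
    (D : Matrix (ι ⊕ ι) (ι ⊕ ι) R) (i j : ι ⊕ ι) :
    (Dᵀ * fromBlocks (0 : Matrix ι ι R) 1 (-1) 0 * D : Matrix (ι ⊕ ι) (ι ⊕ ι) R) i j =
      ∑ k, D (.inl k) i * D (.inr k) j - ∑ k, D (.inr k) i * D (.inl k) j := by
  simp [Matrix.mul_apply, Fintype.sum_sum_type, Matrix.one_apply, sub_eq_add_neg, add_comm]

theorem transpose_mul_fromBlocks_mul_eq_symplecticForm
    (u : ι ⊕ ι → EuclideanSpace ℝ ι × EuclideanSpace ℝ ι) (D : Matrix (ι ⊕ ι) (ι ⊕ ι) ℝ)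
    (hD : ∀ i j, D i j = Sum.elim (u j).1 (u j).2 i) :
    Dᵀ * fromBlocks (0 : Matrix ι ι ℝ) 1 (-1) 0 * D = of fun i j => symplecticForm (u i) (u j) := by
  ext i j
  rw [transpose_mul_fromBlocks_mul_apply]
  simp [hD, symplecticForm, PiLp.inner_apply, mul_comm]

theorem fromBlocks_eq_symplecticForm_euclideanProdBasis :
    fromBlocks (0 : Matrix ι ι ℝ) 1 (-1) 0 =
      of fun i j => symplecticForm (euclideanProdBasis i) (euclideanProdBasis (ι := ι) j) := by
  simpa using transpose_mul_fromBlocks_mul_eq_symplecticForm euclideanProdBasis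
    (1 : Matrix (ι ⊕ ι) (ι ⊕ ι) ℝ)
    (by rintro (i | i) (j | j) <;> simp [euclideanProdBasis, Matrix.one_apply, Pi.single_apply])

end

theorem generating_function_map_is_symplectic_general
    (d : ℕ)
    (S : EuclideanSpace ℝ (Fin d) × EuclideanSpace ℝ (Fin d) → ℝ)
    (hS : ContDiff ℝ 2 S)
    (U : Set (EuclideanSpace ℝ (Fin d) × EuclideanSpace ℝ (Fin d)))
    (hU : IsOpen U)
    (Q P : EuclideanSpace ℝ (Fin d) × EuclideanSpace ℝ (Fin d) →
      EuclideanSpace ℝ (Fin d))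
    (hQ : DifferentiableOn ℝ Q U)
    (hgen : ∀ x ∈ U,
      x.2 = -gradient (fun a => S (a, Q x)) x.1 ∧
      P x = gradient (fun b => S (x.1, b)) (Q x)) :
    ∀ x ∈ U, ∀ D : Matrix (Fin d ⊕ Fin d) (Fin d ⊕ Fin d) ℝ,
      (∀ i j : Fin d ⊕ Fin d,
        D i j =
          Sum.elim
            (fun k => (fderiv ℝ (fun y => (Q y, P y)) x
              (Sum.elim
                (fun l => ((EuclideanSpace.single l 1 : EuclideanSpace ℝ (Fin d)),
                  (0 : EuclideanSpace ℝ (Fin d))))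
                (fun l => ((0 : EuclideanSpace ℝ (Fin d)),
                  (EuclideanSpace.single l 1 : EuclideanSpace ℝ (Fin d)))) j)).1 k)
            (fun k => (fderiv ℝ (fun y => (Q y, P y)) x
              (Sum.elim
                (fun l => ((EuclideanSpace.single l 1 : EuclideanSpace ℝ (Fin d)),
                  (0 : EuclideanSpace ℝ (Fin d))))
                (fun l => ((0 : EuclideanSpace ℝ (Fin d)),
                  (EuclideanSpace.single l 1 : EuclideanSpace ℝ (Fin d)))) j)).2 k) i) →
      Dᵀ * Matrix.fromBlocks (0 : Matrix (Fin d) (Fin d) ℝ) 1 (-1) 0 * D =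
        Matrix.fromBlocks (0 : Matrix (Fin d) (Fin d) ℝ) 1 (-1) 0 := by
  intro x hx D hD
  have hUx : U ∈ 𝓝 x := hU.mem_nhds hx
  rw [transpose_mul_fromBlocks_mul_eq_symplecticForm
    (fun j => fderiv ℝ (fun y => (Q y, P y)) x (euclideanProdBasis j)) D hD,
    fromBlocks_eq_symplecticForm_euclideanProdBasis]
  ext i j
  exact symplecticForm_fderiv_eq_of_generatingFunction hS (hQ.differentiableAt hUx)
    (eventually_of_mem hUx hgen) _ _

/-- If `S(q_a, q_b)` is a C² generating function of the first
kind for the map `φ = (Q, P)` on an open set `U` (i.e. `p₀ = −∇₁S(q₀, Q(q₀,p₀))`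
and `P(q₀,p₀) = ∇₂S(q₀, Q(q₀,p₀))`), then `φ` is symplectic: at every `x ∈ U`
the total derivative `Dφ(x)`, viewed as a `(2d) × (2d)` real matrix `D`, satisfies
`Dᵀ J D = J` with `J = [[0, I],[−I, 0]]` the canonical symplectic matrix. -/
theorem generating_function_map_is_symplectic
    (d : ℕ) (hd : 1 ≤ d)
    (S : EuclideanSpace ℝ (Fin d) × EuclideanSpace ℝ (Fin d) → ℝ)
    (hS : ContDiff ℝ 2 S)
    (U : Set (EuclideanSpace ℝ (Fin d) × EuclideanSpace ℝ (Fin d)))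
    (hU : IsOpen U)
    (Q P : EuclideanSpace ℝ (Fin d) × EuclideanSpace ℝ (Fin d) →
      EuclideanSpace ℝ (Fin d))
    (hQ : DifferentiableOn ℝ Q U) (hP : DifferentiableOn ℝ P U)
    (hgen : ∀ x ∈ U,
      x.2 = -gradient (fun a => S (a, Q x)) x.1 ∧
      P x = gradient (fun b => S (x.1, b)) (Q x)) :
    ∀ x ∈ U, ∀ D : Matrix (Fin d ⊕ Fin d) (Fin d ⊕ Fin d) ℝ,
      (∀ i j : Fin d ⊕ Fin d,
        D i j =
          Sum.elim
            (fun k => (fderiv ℝ (fun y => (Q y, P y)) x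
              (Sum.elim
                (fun l => ((EuclideanSpace.single l 1 : EuclideanSpace ℝ (Fin d)),
                  (0 : EuclideanSpace ℝ (Fin d))))
                (fun l => ((0 : EuclideanSpace ℝ (Fin d)),
                  (EuclideanSpace.single l 1 : EuclideanSpace ℝ (Fin d)))) j)).1 k)
            (fun k => (fderiv ℝ (fun y => (Q y, P y)) x
              (Sum.elim
                (fun l => ((EuclideanSpace.single l 1 : EuclideanSpace ℝ (Fin d)),
                  (0 : EuclideanSpace ℝ (Fin d))))
                (fun l => ((0 : EuclideanSpace ℝ (Fin d)),
                  (EuclideanSpace.single l 1 : EuclideanSpace ℝ (Fin d)))) j)).2 k) i) →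
      Dᵀ * Matrix.fromBlocks (0 : Matrix (Fin d) (Fin d) ℝ) 1 (-1) 0 * D =
        Matrix.fromBlocks (0 : Matrix (Fin d) (Fin d) ℝ) 1 (-1) 0 :=
  generating_function_map_is_symplectic_general d S hS U hU Q P hQ hgen
end

section
/- Let d ≥ 1, let H : ℝ^d × ℝ^d → ℝ and σ : ℝ^d × ℝ^d → ℝ be continuously differentiable with σ(q, p) > 0 for all (q, p), let H₀ ∈ ℝ, and define the time-transformed Hamiltonian K(q, p) = σ(q, p)·(H(q, p) − H₀). Suppose (q, p) : ℝ → ℝ^d × ℝ^d is a differentiable curve satisfying Hamilton's equations for K, i.e. q'(τ) = ∇_p K(q(τ), p(τ)) and p'(τ) = −∇_q K(q(τ), p(τ)) for all τ, and suppose H(q(0), p(0)) = H₀. Then H(q(τ), p(τ)) = H₀ for all τ ∈ ℝ; that is, the energy level set {H = H₀} is invariant under the flow of K. -/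
/-!
Write `X_f = (∇_p f, -∇_q f)`. By the Leibniz rule, `X_K = σ X_H + (H - H₀) X_σ`, and `dH(X_H) = 0`
by antisymmetry, so along a solution the energy defect `E = H - H₀` satisfies the linear equation
`E' = c E` with the continuous coefficient `c = dH(X_σ)`. Hence `E(τ) = E(0) exp (∫₀^τ c) = 0`.
-/

open scoped RealInnerProductSpace

open ContinuousLinearMap InnerProductSpace

theorem eq_mul_exp_integral_of_hasDerivAt {c u : ℝ → ℝ} (hc : Continuous c)
    (hu : ∀ t, HasDerivAt u (c t * u t) t) (t : ℝ) :
    u t = u 0 * Real.exp (∫ s in (0 : ℝ)..t, c s) := by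
  set C : ℝ → ℝ := fun t => ∫ s in (0 : ℝ)..t, c s
  have hC : ∀ t, HasDerivAt C (c t) t := fun t =>
    (hc.integral_hasStrictDerivAt 0 t).hasDerivAt
  have hg : ∀ t, HasDerivAt (fun t => u t * Real.exp (-C t)) 0 t := fun t =>
    ((hu t).mul (hC t).neg.exp).congr_deriv (by ring)
  have hconst : u t * Real.exp (-C t) = u 0 * Real.exp (-C 0) :=
    is_const_of_deriv_eq_zero (fun t => (hg t).differentiableAt) (fun t => (hg t).deriv) t 0
  have hC0 : C 0 = 0 := intervalIntegral.integral_same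
  rw [hC0, neg_zero, Real.exp_zero, mul_one] at hconst
  rw [← hconst, mul_assoc, ← Real.exp_add, neg_add_cancel, Real.exp_zero, mul_one]

section PartialGradients

variable {F : Type*} [NormedAddCommGroup F] [InnerProductSpace ℝ F] [CompleteSpace F]

noncomputable def gradFst (f : F × F → ℝ) (x : F × F) : F :=
  (toDual ℝ F).symm ((fderiv ℝ f x).comp (inl ℝ F F))

noncomputable def gradSnd (f : F × F → ℝ) (x : F × F) : F :=
  (toDual ℝ F).symm ((fderiv ℝ f x).comp (inr ℝ F F))

noncomputable def hamiltonianVectorField (K : F × F → ℝ) (x : F × F) : F × F :=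
  (gradSnd K x, -gradFst K x)

theorem fderiv_apply_eq_inner_gradFst_add_inner_gradSnd (f : F × F → ℝ) (x v : F × F) :
    fderiv ℝ f x v = ⟪gradFst f x, v.1⟫ + ⟪gradSnd f x, v.2⟫ := by
  rw [gradFst, gradSnd, toDual_symm_apply, toDual_symm_apply, comp_apply, comp_apply,
    inl_apply, inr_apply, ← map_add, Prod.mk_add_mk, add_zero, zero_add]

theorem gradient_comp_prodMk_left_s7 {f : F × F → ℝ} {a b : F}
    (hf : DifferentiableAt ℝ f (a, b)) :
    gradient (fun y => f (a, y)) b = gradSnd f (a, b) := by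
  rw [gradient, gradSnd, ← (hf.hasFDerivAt.comp b (hasFDerivAt_prodMk_right a b)).fderiv]
  rfl

theorem gradient_comp_prodMk_right_s7 {f : F × F → ℝ} {a b : F}
    (hf : DifferentiableAt ℝ f (a, b)) :
    gradient (fun y => f (y, b)) a = gradFst f (a, b) := by
  rw [gradient, gradFst, ← (hf.hasFDerivAt.comp a (hasFDerivAt_prodMk_left a b)).fderiv]
  rfl

theorem continuous_gradFst {f : F × F → ℝ} (hf : ContDiff ℝ 1 f) : Continuous (gradFst f) :=
  (toDual ℝ F).symm.continuous.comp <|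
    ((compL ℝ F (F × F) ℝ).flip (inl ℝ F F)).continuous.comp (hf.continuous_fderiv one_ne_zero)

theorem continuous_gradSnd {f : F × F → ℝ} (hf : ContDiff ℝ 1 f) : Continuous (gradSnd f) :=
  (toDual ℝ F).symm.continuous.comp <|
    ((compL ℝ F (F × F) ℝ).flip (inr ℝ F F)).continuous.comp (hf.continuous_fderiv one_ne_zero)

theorem continuous_hamiltonianVectorField {K : F × F → ℝ} (hK : ContDiff ℝ 1 K) :
    Continuous (hamiltonianVectorField K) :=
  (continuous_gradSnd hK).prodMk (continuous_gradFst hK).neg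

theorem fderiv_apply_hamiltonianVectorField_self (H : F × F → ℝ) (x : F × F) :
    fderiv ℝ H x (hamiltonianVectorField H x) = 0 := by
  rw [fderiv_apply_eq_inner_gradFst_add_inner_gradSnd, hamiltonianVectorField, inner_neg_right,
    real_inner_comm, add_neg_cancel]

theorem hamiltonianVectorField_mul {f g : F × F → ℝ} {x : F × F}
    (hf : DifferentiableAt ℝ f x) (hg : DifferentiableAt ℝ g x) :
    hamiltonianVectorField (fun y => f y * g y) x =
      f x • hamiltonianVectorField g x + g x • hamiltonianVectorField f x := by
  simp only [hamiltonianVectorField, gradFst, gradSnd, fderiv_fun_mul hf hg, add_comp, smul_comp,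
    map_add, map_smul, Prod.smul_mk, Prod.mk_add_mk, smul_neg, neg_add]

theorem hamiltonianVectorField_sub_const (f : F × F → ℝ) (c : ℝ) :
    hamiltonianVectorField (fun y => f y - c) = hamiltonianVectorField f := by
  funext x
  simp only [hamiltonianVectorField, gradFst, gradSnd, fderiv_sub_const]

theorem fderiv_apply_hamiltonianVectorField_mul_sub_const {H σ : F × F → ℝ} {x : F × F}
    (H₀ : ℝ) (hH : DifferentiableAt ℝ H x) (hσ : DifferentiableAt ℝ σ x) :
    fderiv ℝ H x (hamiltonianVectorField (fun y => σ y * (H y - H₀)) x) =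
      fderiv ℝ H x (hamiltonianVectorField σ x) * (H x - H₀) := by
  rw [hamiltonianVectorField_mul hσ (hH.sub_const H₀), hamiltonianVectorField_sub_const, map_add,
    map_smul, map_smul, fderiv_apply_hamiltonianVectorField_self, smul_eq_mul, smul_eq_mul,
    mul_zero, zero_add, mul_comm]

end PartialGradients

theorem time_transformed_flow_preserves_energy_level_general
    (d : ℕ)
    (H σ : EuclideanSpace ℝ (Fin d) × EuclideanSpace ℝ (Fin d) → ℝ)
    (hH : ContDiff ℝ 1 H) (hσ : ContDiff ℝ 1 σ)
    (H₀ : ℝ)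
    (K : EuclideanSpace ℝ (Fin d) × EuclideanSpace ℝ (Fin d) → ℝ)
    (hK : ∀ x, K x = σ x * (H x - H₀))
    (q p : ℝ → EuclideanSpace ℝ (Fin d))
    (hq : ∀ τ : ℝ, HasDerivAt q (gradient (fun y => K (q τ, y)) (p τ)) τ)
    (hp : ∀ τ : ℝ, HasDerivAt p (-gradient (fun x => K (x, p τ)) (q τ)) τ)
    (h0 : H (q 0, p 0) = H₀) :
    ∀ τ : ℝ, H (q τ, p τ) = H₀ := by
  have hKeq : K = fun x => σ x * (H x - H₀) := funext hK
  have hKdiff : Differentiable ℝ K :=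
    hKeq ▸ (hσ.mul (hH.sub contDiff_const)).differentiable one_ne_zero
  have hHdiff := hH.differentiable one_ne_zero
  have hflow : ∀ τ, HasDerivAt (fun t => (q t, p t)) (hamiltonianVectorField K (q τ, p τ)) τ :=
    fun τ => by
      rw [hamiltonianVectorField, ← gradient_comp_prodMk_left_s7 (hKdiff _),
        ← gradient_comp_prodMk_right_s7 (hKdiff _)]
      exact (hq τ).prodMk (hp τ)
  set c : ℝ → ℝ := fun t => fderiv ℝ H (q t, p t) (hamiltonianVectorField σ (q t, p t))
  have hcont : Continuous c := by
    have hγ : Continuous fun t => (q t, p t) :=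
      continuous_iff_continuousAt.2 fun τ => (hflow τ).continuousAt
    exact ((hH.continuous_fderiv one_ne_zero).comp hγ).clm_apply
      ((continuous_hamiltonianVectorField hσ).comp hγ)
  have hdefect : ∀ τ, HasDerivAt (fun t => H (q t, p t) - H₀) (c τ * (H (q τ, p τ) - H₀)) τ :=
    fun τ => by
      rw [← fderiv_apply_hamiltonianVectorField_mul_sub_const H₀ (hHdiff _)
        (hσ.differentiable one_ne_zero _), ← hKeq]
      exact ((hHdiff _).hasFDerivAt.comp_hasDerivAt τ (hflow τ)).sub_const H₀
  intro τ
  have hsol := eq_mul_exp_integral_of_hasDerivAt hcont hdefect τ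
  rw [h0, sub_self, zero_mul] at hsol
  exact sub_eq_zero.1 hsol

/-- For the Darboux–Sundman time-transformed Hamiltonian
`K = σ·(H − H₀)` with `σ > 0`, any solution of Hamilton's equations for `K`
starting on the energy level `H = H₀` stays on it for all fictitious times. -/
theorem time_transformed_flow_preserves_energy_level
    (d : ℕ) (hd : 1 ≤ d)
    (H σ : EuclideanSpace ℝ (Fin d) × EuclideanSpace ℝ (Fin d) → ℝ)
    (hH : ContDiff ℝ 1 H) (hσ : ContDiff ℝ 1 σ)
    (hσpos : ∀ x, 0 < σ x)
    (H₀ : ℝ)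
    (K : EuclideanSpace ℝ (Fin d) × EuclideanSpace ℝ (Fin d) → ℝ)
    (hK : ∀ x, K x = σ x * (H x - H₀))
    (q p : ℝ → EuclideanSpace ℝ (Fin d))
    (hq : ∀ τ : ℝ, HasDerivAt q (gradient (fun y => K (q τ, y)) (p τ)) τ)
    (hp : ∀ τ : ℝ, HasDerivAt p (-gradient (fun x => K (x, p τ)) (q τ)) τ)
    (h0 : H (q 0, p 0) = H₀) :
    ∀ τ : ℝ, H (q τ, p τ) = H₀ :=
  time_transformed_flow_preserves_energy_level_general d H σ hH hσ H₀ K hK q p hq hp h0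
end

section
/- Let d ≥ 1, let H : ℝ^d × ℝ^d → ℝ and σ : ℝ^d × ℝ^d → ℝ be continuously differentiable with σ(q, p) > 0 for all (q, p), let H₀ ∈ ℝ, and define K(q, p) = σ(q, p)·(H(q, p) − H₀). Suppose (q, p) : ℝ → ℝ^d × ℝ^d is a differentiable curve satisfying Hamilton's equations for K and H(q(0), p(0)) = H₀. Then for all τ ∈ ℝ the curve satisfies the rescaled Hamilton equations of the original system: q'(τ) = σ(q(τ), p(τ)) ∇_p H(q(τ), p(τ)) and p'(τ) = −σ(q(τ), p(τ)) ∇_q H(q(τ), p(τ)). -/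
open scoped RealInnerProductSpace

/-! Along a solution of Hamilton's equations for `K` the value of `K` is conserved, since
`dK/dτ = ⟪∇_q K, ∇_p K⟫ - ⟪∇_p K, ∇_q K⟫ = 0`. Starting on `H = H₀`, this keeps
`K = σ (H - H₀)` at zero, so `H = H₀` along the whole curve because `σ > 0`. On that level set
the product rule gives `∇K = σ ∇H + (H - H₀) ∇σ = σ ∇H`, which turns Hamilton's equations for `K`
into the rescaled equations for `H`. -/

section Gradient

variable {E : Type*} [NormedAddCommGroup E] [InnerProductSpace ℝ E] [CompleteSpace E]

theorem inner_gradient_partial_left {f : E × E → ℝ} {a b : E} (hf : DifferentiableAt ℝ f (a, b))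
    (u : E) : ⟪gradient (fun x => f (x, b)) a, u⟫ = fderiv ℝ f (a, b) (u, 0) := by
  have h : HasFDerivAt (fun x => f (x, b)) ((fderiv ℝ f (a, b)).comp (.inl ℝ E E)) a :=
    hf.hasFDerivAt.comp a (hasFDerivAt_prodMk_left a b)
  rw [inner_gradient_left, h.fderiv]
  rfl

theorem inner_gradient_partial_right {f : E × E → ℝ} {a b : E} (hf : DifferentiableAt ℝ f (a, b))
    (v : E) : ⟪gradient (fun y => f (a, y)) b, v⟫ = fderiv ℝ f (a, b) (0, v) := by
  have h : HasFDerivAt (fun y => f (a, y)) ((fderiv ℝ f (a, b)).comp (.inr ℝ E E)) b :=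
    hf.hasFDerivAt.comp b (hasFDerivAt_prodMk_right a b)
  rw [inner_gradient_left, h.fderiv]
  rfl

theorem fderiv_apply_hamiltonian_vectorField_eq_zero {K : E × E → ℝ} {a b : E}
    (hK : DifferentiableAt ℝ K (a, b)) :
    fderiv ℝ K (a, b) (gradient (fun y => K (a, y)) b, -gradient (fun x => K (x, b)) a) = 0 := by
  set gq := gradient (fun x => K (x, b)) a
  set gp := gradient (fun y => K (a, y)) b
  calc fderiv ℝ K (a, b) (gp, -gq)
      = fderiv ℝ K (a, b) (gp, 0) + fderiv ℝ K (a, b) (0, -gq) := by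
        rw [← map_add, Prod.mk_add_mk, add_zero, zero_add]
    _ = ⟪gq, gp⟫ + ⟪gp, -gq⟫ := by
        rw [inner_gradient_partial_left hK, inner_gradient_partial_right hK]
    _ = 0 := by rw [inner_neg_right, real_inner_comm, add_neg_cancel]

theorem hamiltonian_const_of_hamilton_equations {K : E × E → ℝ} (hK : Differentiable ℝ K)
    {q p : ℝ → E}
    (hq : ∀ τ : ℝ, HasDerivAt q (gradient (fun y => K (q τ, y)) (p τ)) τ)
    (hp : ∀ τ : ℝ, HasDerivAt p (-gradient (fun x => K (x, p τ)) (q τ)) τ) (τ₀ τ : ℝ) :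
    K (q τ, p τ) = K (q τ₀, p τ₀) := by
  have hderiv : ∀ t, HasDerivAt (fun t => K (q t, p t)) 0 t := fun t => by
    have h := (hK _).hasFDerivAt.comp_hasDerivAt t ((hq t).prodMk (hp t))
    rwa [fderiv_apply_hamiltonian_vectorField_eq_zero (hK _)] at h
  exact is_const_of_deriv_eq_zero (fun t => (hderiv t).differentiableAt)
    (fun t => (hderiv t).deriv) τ τ₀

theorem gradient_mul_sub_const_of_eq {f g : E → ℝ} {x : E} {c : ℝ}
    (hf : DifferentiableAt ℝ f x) (hg : DifferentiableAt ℝ g x) (hgx : g x = c) :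
    gradient (fun y => f y * (g y - c)) x = f x • gradient g x := by
  refine ext_inner_right ℝ fun v => ?_
  rw [inner_gradient_left, real_inner_smul_left, inner_gradient_left,
    fderiv_fun_mul hf (hg.sub_const c), fderiv_sub_const]
  simp [hgx]

end Gradient

theorem time_transformed_flow_satisfies_rescaled_equations_general
    (d : ℕ)
    (H σ : EuclideanSpace ℝ (Fin d) × EuclideanSpace ℝ (Fin d) → ℝ)
    (hH : ContDiff ℝ 1 H) (hσ : ContDiff ℝ 1 σ)
    (hσpos : ∀ x, 0 < σ x)
    (H₀ : ℝ)
    (K : EuclideanSpace ℝ (Fin d) × EuclideanSpace ℝ (Fin d) → ℝ)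
    (hK : ∀ x, K x = σ x * (H x - H₀))
    (q p : ℝ → EuclideanSpace ℝ (Fin d))
    (hq : ∀ τ : ℝ, HasDerivAt q (gradient (fun y => K (q τ, y)) (p τ)) τ)
    (hp : ∀ τ : ℝ, HasDerivAt p (-gradient (fun x => K (x, p τ)) (q τ)) τ)
    (h0 : H (q 0, p 0) = H₀) :
    ∀ τ : ℝ,
      HasDerivAt q
        (σ (q τ, p τ) • gradient (fun y => H (q τ, y)) (p τ)) τ ∧
      HasDerivAt p
        (-(σ (q τ, p τ) • gradient (fun x => H (x, p τ)) (q τ))) τ := by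
  have hHd : Differentiable ℝ H := hH.differentiable one_ne_zero
  have hσd : Differentiable ℝ σ := hσ.differentiable one_ne_zero
  have hKd : Differentiable ℝ K := by
    rw [funext hK]
    exact hσd.mul (hHd.sub_const H₀)
  have hlevel : ∀ τ, H (q τ, p τ) = H₀ := fun τ => by
    have hKτ := hamiltonian_const_of_hamilton_equations hKd hq hp 0 τ
    rw [hK, hK, h0, sub_self, mul_zero, mul_eq_zero] at hKτ
    exact sub_eq_zero.mp (hKτ.resolve_left (hσpos _).ne')
  intro τ
  have hgrad_p : gradient (fun y => K (q τ, y)) (p τ)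
      = σ (q τ, p τ) • gradient (fun y => H (q τ, y)) (p τ) := by
    simp only [hK]
    exact gradient_mul_sub_const_of_eq (by fun_prop) (by fun_prop) (hlevel τ)
  have hgrad_q : gradient (fun x => K (x, p τ)) (q τ)
      = σ (q τ, p τ) • gradient (fun x => H (x, p τ)) (q τ) := by
    simp only [hK]
    exact gradient_mul_sub_const_of_eq (by fun_prop) (by fun_prop) (hlevel τ)
  exact ⟨hgrad_p ▸ hq τ, hgrad_q ▸ hp τ⟩

/-- A solution of Hamilton's equations for the time-transformed
Hamiltonian `K = σ·(H − H₀)` starting on the level `H = H₀` satisfies the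
rescaled Hamilton equations of the original system:
`q' = σ ∇_p H` and `p' = −σ ∇_q H`. -/
theorem time_transformed_flow_satisfies_rescaled_equations
    (d : ℕ) (hd : 1 ≤ d)
    (H σ : EuclideanSpace ℝ (Fin d) × EuclideanSpace ℝ (Fin d) → ℝ)
    (hH : ContDiff ℝ 1 H) (hσ : ContDiff ℝ 1 σ)
    (hσpos : ∀ x, 0 < σ x)
    (H₀ : ℝ)
    (K : EuclideanSpace ℝ (Fin d) × EuclideanSpace ℝ (Fin d) → ℝ)
    (hK : ∀ x, K x = σ x * (H x - H₀))
    (q p : ℝ → EuclideanSpace ℝ (Fin d))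
    (hq : ∀ τ : ℝ, HasDerivAt q (gradient (fun y => K (q τ, y)) (p τ)) τ)
    (hp : ∀ τ : ℝ, HasDerivAt p (-gradient (fun x => K (x, p τ)) (q τ)) τ)
    (h0 : H (q 0, p 0) = H₀) :
    ∀ τ : ℝ,
      HasDerivAt q
        (σ (q τ, p τ) • gradient (fun y => H (q τ, y)) (p τ)) τ ∧
      HasDerivAt p
        (-(σ (q τ, p τ) • gradient (fun x => H (x, p τ)) (q τ))) τ :=
  time_transformed_flow_satisfies_rescaled_equations_general d H σ hH hσ hσpos H₀ K hK q p hq hp h0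
end
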